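/- Let Θ : [0,∞) → (open subsets of (0,1)) satisfy: (i) Θ(t′) ⊆ Θ(t) whenever t ≤ t′; (ii) for every t, the set (0,1) \ Θ(t) has Lebesgue measure zero; (iii) for every t₀ ≥ 0 and every x ∈ (0,1), the map t ↦ |I_x(t)| is right-continuous at t₀, where |I_x(t)| denotes the Lebesgue measure of the connected component of x in Θ(t) (equal to 0 if x ∉ Θ(t)). Let a ≤ q be nonzero real numbers and assume that for every t ≥ 0 the function x ↦ |I_x(t)|^a is integrable on (0,1) (with 0^a := 0). Then the function t ↦ ∫_0^1 |I_x(t)|^q dx is right-continuous on [0,∞). -/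

import Mathlib

open MeasureTheory Set Filter
open scoped NNReal ENNReal

noncomputable section

/-- Real power with the convention `0 ^ r = 0` for every exponent `r`. -/
def pw (x r : ℝ) : ℝ := if x = 0 then 0 else x ^ r

/-!
Write `ℓ_t(x)` for the length of the component of `x` in `Θ(t)`. It is at most `1`, decreases
in `t`, and is positive for almost every `x`, since `Θ(t)` is open of full measure. So for
`t ∈ [t₀, t₀ + 1]` and almost every `x` we have `0 < ℓ_{t₀+1}(x) ≤ ℓ_t(x) ≤ 1`, whence
`ℓ_t(x)^q ≤ 1 + ℓ_{t₀+1}(x)^a`: for `q ≥ 0` the left side is at most `1`, and for `q < 0` also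
`a < 0`, so `ℓ_t^q ≤ ℓ_t^a ≤ ℓ_{t₀+1}^a`. Dominated convergence then transfers the right
continuity of each `ℓ_·(x)` to the integral. Measurability of `ℓ_t` comes from that of the
integrable `ℓ_t^a`, by raising to the power `1/a`.
-/

open scoped Topology

lemma pw_of_ne_zero {y : ℝ} (hy : y ≠ 0) (r : ℝ) : pw y r = y ^ r := if_neg hy

lemma measurable_pw (r : ℝ) : Measurable fun y : ℝ => pw y r :=
  Measurable.ite (measurableSet_singleton 0) measurable_const (measurable_id.pow_const r)

lemma pw_pw_inv {a y : ℝ} (ha : a ≠ 0) (hy : 0 ≤ y) : pw (pw y a) a⁻¹ = y := by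
  rcases hy.eq_or_lt with rfl | hy
  · simp [pw]
  · rw [pw_of_ne_zero hy.ne', pw_of_ne_zero (Real.rpow_pos_of_pos hy a).ne',
      Real.rpow_rpow_inv hy.le ha]

lemma AEMeasurable.of_pw {α : Type*} [MeasurableSpace α] {μ : Measure α} {f : α → ℝ} {a : ℝ}
    (ha : a ≠ 0) (hf : ∀ x, 0 ≤ f x) (h : AEMeasurable (fun x => pw (f x) a) μ) :
    AEMeasurable f μ := by
  have h' := (measurable_pw a⁻¹).comp_aemeasurable h
  simpa only [Function.comp_def, pw_pw_inv ha (hf _)] using h'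

lemma rpow_le_one_add_rpow {s y a q : ℝ} (hs : 0 < s) (hsy : s ≤ y) (hy : y ≤ 1) (haq : a ≤ q) :
    y ^ q ≤ 1 + s ^ a := by
  rcases le_total q 0 with hq | hq
  · calc y ^ q ≤ y ^ a := Real.rpow_le_rpow_of_exponent_ge (hs.trans_le hsy) hy haq
      _ ≤ s ^ a := Real.rpow_le_rpow_of_nonpos hs hsy (haq.trans hq)
      _ ≤ 1 + s ^ a := le_add_of_nonneg_left zero_le_one
  · linarith [Real.rpow_le_one (hs.le.trans hsy) hy hq, Real.rpow_nonneg hs.le a]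

lemma continuousAt_pw {y : ℝ} (hy : y ≠ 0) (r : ℝ) : ContinuousAt (fun z => pw z r) y :=
  (Real.continuousAt_rpow_const y r (Or.inl hy)).congr
    ((eventually_ne_nhds hy).mono fun _ hz => (pw_of_ne_zero hz r).symm)

theorem tendsto_integral_pw_of_le {α ι : Type*} [MeasurableSpace α] {μ : Measure α}
    [IsFiniteMeasure μ] {l : Filter ι} [l.IsCountablyGenerated] {ℓ : ι → α → ℝ} {g L : α → ℝ}
    {a q : ℝ} (haq : a ≤ q) (hℓ : ∀ᶠ t in l, AEMeasurable (ℓ t) μ)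
    (hg : Integrable (fun x => pw (g x) a) μ)
    (hbound : ∀ᶠ t in l, ∀ᵐ x ∂μ, 0 < g x ∧ g x ≤ ℓ t x ∧ ℓ t x ≤ 1)
    (hlim : ∀ᵐ x ∂μ, Tendsto (fun t => ℓ t x) l (𝓝 (L x))) (hL : ∀ᵐ x ∂μ, 0 < L x) :
    Tendsto (fun t => ∫ x, pw (ℓ t x) q ∂μ) l (𝓝 (∫ x, pw (L x) q ∂μ)) := by
  refine tendsto_integral_filter_of_dominated_convergence (fun x => 1 + pw (g x) a)
    (hℓ.mono fun t ht => ((measurable_pw q).comp_aemeasurable ht).aestronglyMeasurable)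
    ?_ ((integrable_const 1).add hg) ?_
  · filter_upwards [hbound] with t ht
    filter_upwards [ht] with x ⟨hg0, hgℓ, hℓ1⟩
    have hℓ0 := hg0.trans_le hgℓ
    rw [pw_of_ne_zero hℓ0.ne', pw_of_ne_zero hg0.ne', Real.norm_of_nonneg (by positivity)]
    exact rpow_le_one_add_rpow hg0 hgℓ hℓ1 haq
  · filter_upwards [hlim, hL] with x hx hLx
    exact (continuousAt_pw hLx.ne' q).tendsto.comp hx

lemma ae_restrict_mem_of_measure_diff_eq_zero {α : Type*} [MeasurableSpace α] {μ : Measure α}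
    {s U : Set α} (hs : MeasurableSet s) (h : μ (s \ U) = 0) : ∀ᵐ x ∂μ.restrict s, x ∈ U := by
  rwa [ae_iff, Measure.restrict_apply' hs, inter_comm]

def componentLength (U : Set ℝ) (x : ℝ) : ℝ := (volume (connectedComponentIn U x)).toReal

section ComponentLength

variable {U V : Set ℝ} {x : ℝ}

lemma componentLength_le_one (hU : U ⊆ Ioo 0 1) : componentLength U x ≤ 1 := by
  have := measure_mono (μ := volume) ((connectedComponentIn_subset U x).trans hU)
  simpa [componentLength] using ENNReal.toReal_mono (by simp) this

lemma componentLength_mono (hV : volume V ≠ ∞) (hUV : U ⊆ V) :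
    componentLength U x ≤ componentLength V x :=
  ENNReal.toReal_mono (measure_ne_top_of_subset (connectedComponentIn_subset V x) hV)
    (measure_mono (connectedComponentIn_mono x hUV))

lemma componentLength_pos (hU : IsOpen U) (hfin : volume U ≠ ∞) (hx : x ∈ U) :
    0 < componentLength U x :=
  ENNReal.toReal_pos (hU.connectedComponentIn.measure_pos volume
      ⟨x, mem_connectedComponentIn hx⟩).ne'
    (measure_ne_top_of_subset (connectedComponentIn_subset U x) hfin)

end ComponentLength

theorem rightContinuous_integral_component_length_general (Θ : ℝ≥0 → Set ℝ)
    (hopen : ∀ t, IsOpen (Θ t)) (hsub : ∀ t, Θ t ⊆ Set.Ioo (0 : ℝ) 1)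
    (hnested : ∀ t t' : ℝ≥0, t ≤ t' → Θ t' ⊆ Θ t)
    (hfull : ∀ t, volume (Set.Ioo (0 : ℝ) 1 \ Θ t) = 0)
    (hrc : ∀ (t₀ : ℝ≥0) (x : ℝ), ContinuousWithinAt
      (fun t => (volume (connectedComponentIn (Θ t) x)).toReal)
      (Set.Ici t₀) t₀)
    (a q : ℝ) (ha : a ≠ 0) (haq : a ≤ q)
    (hint : ∀ t, IntegrableOn
      (fun x => pw (volume (connectedComponentIn (Θ t) x)).toReal a)
      (Set.Ioo (0 : ℝ) 1))
    (t₀ : ℝ≥0) :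
    ContinuousWithinAt
      (fun t => ∫ x in Set.Ioo (0 : ℝ) 1,
        pw (volume (connectedComponentIn (Θ t) x)).toReal q)
      (Set.Ici t₀) t₀ := by
  have hfin : ∀ t, volume (Θ t) ≠ ∞ := fun t =>
    measure_ne_top_of_subset (hsub t) (by simp)
  have hmem : ∀ t, ∀ᵐ x ∂volume.restrict (Ioo (0 : ℝ) 1), x ∈ Θ t := fun t =>
    ae_restrict_mem_of_measure_diff_eq_zero measurableSet_Ioo (hfull t)
  have hle : ∀ᶠ t in 𝓝[≥] t₀, t ≤ t₀ + 1 :=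
    nhdsWithin_le_nhds (eventually_le_nhds (lt_add_one t₀))
  refine tendsto_integral_pw_of_le (ℓ := fun t => componentLength (Θ t))
    (g := componentLength (Θ (t₀ + 1))) haq
    (Eventually.of_forall fun t => (hint t).aemeasurable.of_pw ha fun _ => ENNReal.toReal_nonneg)
    (hint (t₀ + 1)) ?_ (Eventually.of_forall (hrc t₀)) ?_
  · filter_upwards [hle] with t ht
    filter_upwards [hmem (t₀ + 1)] with x hx
    exact ⟨componentLength_pos (hopen _) (hfin _) hx,
      componentLength_mono (hfin t) (hnested t _ ht), componentLength_le_one (hsub t)⟩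
  · filter_upwards [hmem t₀] with x hx using componentLength_pos (hopen t₀) (hfin t₀) hx

/-- Interval representation of a fragmentation: if `Θ(t)` is a nested family of
open subsets of `(0,1)` of full Lebesgue measure such that the length
`|I_x(t)|` of the component of each point `x` is right-continuous in `t`, and
if `x ↦ |I_x(t)|^a` is integrable for every `t` (where `a ≤ q` are nonzero),
then `t ↦ ∫₀¹ |I_x(t)|^q dx` is right-continuous on `[0,∞)`. -/
theorem rightContinuous_integral_component_length (Θ : ℝ≥0 → Set ℝ)
    (hopen : ∀ t, IsOpen (Θ t)) (hsub : ∀ t, Θ t ⊆ Set.Ioo (0 : ℝ) 1)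
    (hnested : ∀ t t' : ℝ≥0, t ≤ t' → Θ t' ⊆ Θ t)
    (hfull : ∀ t, volume (Set.Ioo (0 : ℝ) 1 \ Θ t) = 0)
    (hrc : ∀ (t₀ : ℝ≥0) (x : ℝ), ContinuousWithinAt
      (fun t => (volume (connectedComponentIn (Θ t) x)).toReal)
      (Set.Ici t₀) t₀)
    (a q : ℝ) (ha : a ≠ 0) (hq : q ≠ 0) (haq : a ≤ q)
    (hint : ∀ t, IntegrableOn
      (fun x => pw (volume (connectedComponentIn (Θ t) x)).toReal a)
      (Set.Ioo (0 : ℝ) 1))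
    (t₀ : ℝ≥0) :
    ContinuousWithinAt
      (fun t => ∫ x in Set.Ioo (0 : ℝ) 1,
        pw (volume (connectedComponentIn (Θ t) x)).toReal q)
      (Set.Ici t₀) t₀ :=
  rightContinuous_integral_component_length_general Θ hopen hsub hnested hfull hrc a q ha haq hint
    t₀
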